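/- For all nonnegative integers m and n, the probabilistic bivariate r-Bell polynomials satisfy the recurrence φ_{m+n,r}^Y(x,y) = Σ_{i=0}^{n} Σ_{k=0}^{m} (1/k!) · C(n,i) · (x)_k · y^k · φ_i^Y(x−k, y) · Σ_{j=k}^{m} C(m,j) · Σ_{l_1+⋯+l_k=j, l_i≥1} (j!/(l_1!⋯l_k!)) · E[(S_k + r)^{n−i} · ∏_{i'=1}^{k} Y_{i'}^{l_{i'}}] · r^{m−j}, where the innermost sum is over all k-tuples (l_1,…,l_k) of positive integers with l_1+⋯+l_k = j. -/

import Mathlib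

open MeasureTheory ProbabilityTheory Finset

noncomputable section

variable {Ω : Type*} [MeasureSpace Ω]

/-- The falling factorial `(x)_k = x (x-1) ⋯ (x-k+1)`. -/
def fallFac (x : ℝ) (k : ℕ) : ℝ := ∏ i ∈ Finset.range k, (x - (i : ℝ))

/-- Partial sums `S_k = Y_1 + ⋯ + Y_k` (with `S_0 = 0`). -/
def S (Y : ℕ → Ω → ℝ) (k : ℕ) (ω : Ω) : ℝ := ∑ i ∈ Finset.range k, Y i ω

/-- The probabilistic Stirling numbers of the second kind associated with `Y`:
`{n brace k}_Y = (1/k!) ∑_{i=0}^{k} C(k,i) (−1)^{k−i} E[S_i^n]`. -/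
def probStirling (Y : ℕ → Ω → ℝ) (n k : ℕ) : ℝ :=
  ((k.factorial : ℝ))⁻¹ *
    ∑ i ∈ Finset.range (k + 1), (k.choose i : ℝ) * (-1) ^ (k - i) * ∫ ω, (S Y i ω) ^ n

/-- The probabilistic r-Stirling numbers of the second kind associated with `Y`:
`{n+r brace k+r}_{r,Y} = (1/k!) ∑_{j=0}^{k} C(k,j) (−1)^{k−j} E[(S_j + r)^n]`. -/
def probRStirling (Y : ℕ → Ω → ℝ) (r n k : ℕ) : ℝ :=
  ((k.factorial : ℝ))⁻¹ *
    ∑ j ∈ Finset.range (k + 1), (k.choose j : ℝ) * (-1) ^ (k - j) *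
      ∫ ω, (S Y j ω + (r : ℝ)) ^ n

/-- The probabilistic bivariate Bell polynomials associated with `Y`. -/
def phiBiv (Y : ℕ → Ω → ℝ) (n : ℕ) (x y : ℝ) : ℝ :=
  ∑ k ∈ Finset.range (n + 1), probStirling Y n k * fallFac x k * y ^ k

/-- The probabilistic bivariate r-Bell polynomials associated with `Y`. -/
def phiRBiv (Y : ℕ → Ω → ℝ) (r n : ℕ) (x y : ℝ) : ℝ :=
  ∑ k ∈ Finset.range (n + 1), probRStirling Y r n k * fallFac x k * y ^ k

/-- k-tuples of positive integers summing to `j`. -/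
def posTuples (k j : ℕ) : Finset (Fin k → ℕ) :=
  (Finset.Nat.antidiagonalTuple k j).filter fun l => ∀ i, 0 < l i


/-!
Put `G(a, t) = E[(S_a + r)^n (S_t + r)^m]`. Writing the Stirling numbers as iterated forward
differences, the left side is `∑_K (x)_K y^K / K!` times the `K`-th difference of `q ↦ G(q, q)`,
and the right side becomes `∑_{k, p} (x)_k (x - k)_p y^(k+p) / (k! p!)` times the mixed difference
`Δ_s^p Δ_t^k G(k + s, t)` at `0`. Two facts about i.i.d. sums give the right side this shape.
Inclusion–exclusion over the subsets of `{Y_1, …, Y_k}`, together with exchangeability, identifies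
the inner sum over positive tuples with `Δ_t^k E[(S_k + r)^(n-i) (S_t + r)^m]`; and since
`S_{k+s} - S_k` is independent of `(S_k, S_t)` and distributed as `S_s`, the binomial theorem
merges the factor `{i brace p}` (a difference of `s ↦ E[S_s^i]`) into `Δ_s^p G(k + s, t)`.
Finally, the diagonal difference `Δ_{(1,1)} = Δ_{(1,0)} + E_{(1,0)} Δ_{(0,1)}` is a sum of two
commuting operators, and its binomial expansion regroups the mixed differences along the
antidiagonals `k + p = K`. The terms with `k > m` or `p > n` vanish: the inclusion–exclusion
formula expresses such a difference as a sum over positive tuples that is empty.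
-/

open fwdDiff

section FiniteDifferences

variable {A : Type*} [AddCommGroup A]

lemma fwdDiff_iter_congr {f g : ℕ → A} {k : ℕ} (h : ∀ t ≤ k, f t = g t) :
    Δ_[1] ^[k] f 0 = Δ_[1] ^[k] g 0 := by
  simp only [fwdDiff_iter_eq_sum_shift]
  refine Finset.sum_congr rfl fun t ht => ?_
  rw [h _ (by simpa [Nat.lt_succ_iff] using ht)]

open fwdDiff_aux

variable {M : Type*} [AddCommMonoid M]

lemma fwdDiffₗ_add (a b : M) :
    fwdDiffₗ M A (a + b) = fwdDiffₗ M A a + shiftₗ M A a * fwdDiffₗ M A b := by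
  ext f x
  simp [shiftₗ_apply, fwdDiff, add_assoc]

lemma commute_shiftₗ_fwdDiffₗ (a b : M) : Commute (shiftₗ M A a) (fwdDiffₗ M A b) := by
  ext f x
  simp [shiftₗ_apply, fwdDiff, add_right_comm]

lemma commute_fwdDiffₗ (a b : M) : Commute (fwdDiffₗ M A a) (fwdDiffₗ M A b) := by
  ext f x
  simp only [fwdDiffₗ_apply, Module.End.mul_apply, fwdDiff, add_right_comm]
  abel

lemma fwdDiff_iter_diag_eq_sum_antidiagonal (G : ℕ → ℕ → A) (K : ℕ) :
    Δ_[1] ^[K] (fun q => G q q) 0 =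
      ∑ z ∈ antidiagonal K,
        K.choose z.1 • Δ_[1] ^[z.2] (fun s => Δ_[1] ^[z.1] (fun t => G (z.1 + s) t) 0) 0 := by
  set F : ℕ × ℕ → A := fun z => G z.1 z.2
  set E₁ := shiftₗ (ℕ × ℕ) A (1, 0)
  set D₁ := fwdDiffₗ (ℕ × ℕ) A (1, 0)
  set D₂ := fwdDiffₗ (ℕ × ℕ) A (0, 1)
  have hdiag : Δ_[1] ^[K] (fun q => G q q) 0 = ((E₁ * D₂ + D₁) ^ K) F 0 := by
    rw [add_comm, ← fwdDiffₗ_add, coe_fwdDiffₗ_pow]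
    simp [fwdDiff_iter_eq_sum_shift, F]
  have hmixed : ∀ k p, Δ_[1] ^[p] (fun s => Δ_[1] ^[k] (fun t => G (k + s) t) 0) 0 =
      ((E₁ * D₂) ^ k * D₁ ^ p) F 0 := by
    intro k p
    rw [(commute_shiftₗ_fwdDiffₗ _ _).mul_pow, Module.End.mul_apply, Module.End.mul_apply,
      shiftₗ_pow_apply, coe_fwdDiffₗ_pow, coe_fwdDiffₗ_pow]
    simp only [fwdDiff_iter_eq_sum_shift, Finset.smul_sum, F]
    rw [Finset.sum_comm]
    simp only [zero_add, Prod.smul_mk, smul_eq_mul, mul_one, mul_zero, Prod.mk_add_mk, add_zero]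
    exact Finset.sum_congr rfl fun t _ => Finset.sum_congr rfl fun s _ => smul_comm _ _ _
  have hcomm : Commute (E₁ * D₂) D₁ :=
    (commute_shiftₗ_fwdDiffₗ _ _).mul_left (commute_fwdDiffₗ _ _)
  rw [hdiag, hcomm.add_pow, LinearMap.sum_apply, Finset.sum_apply,
    Finset.Nat.sum_antidiagonal_eq_sum_range_succ
      (fun k p => K.choose k • Δ_[1] ^[p] (fun s => Δ_[1] ^[k] (fun t => G (k + s) t) 0) 0)]
  refine Finset.sum_congr rfl fun k _ => ?_
  rw [hmixed, Module.End.mul_apply, Module.End.natCast_apply, map_nsmul, Pi.smul_apply]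

end FiniteDifferences

lemma fwdDiff_iter_fwdDiff_iter_sum_mul_mul {R ι : Type*} [CommRing R] (s : Finset ι)
    (w : ι → R) (a b : ι → ℕ → R) (p k : ℕ) :
    Δ_[1] ^[p] (fun u => Δ_[1] ^[k] (fun t => ∑ i ∈ s, w i * a i u * b i t) 0) 0 =
      ∑ i ∈ s, w i * Δ_[1] ^[p] (a i) 0 * Δ_[1] ^[k] (b i) 0 := by
  simp only [fwdDiff_iter_eq_sum_shift, Finset.sum_mul, Finset.mul_sum, zsmul_eq_mul]
  conv_rhs => rw [Finset.sum_comm]; arg 2; ext t; rw [Finset.sum_comm]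
  rw [Finset.sum_comm]
  refine Finset.sum_congr rfl fun t _ => Finset.sum_congr rfl fun u _ =>
    Finset.sum_congr rfl fun i _ => ?_
  ring

lemma sum_range_sum_range_eq_sum_antidiagonal {M : Type*} [AddCommMonoid M] (f : ℕ → ℕ → M)
    (m n : ℕ) (hm : ∀ k p, m < k → f k p = 0) (hn : ∀ k p, n < p → f k p = 0) :
    ∑ k ∈ Finset.range (m + 1), ∑ p ∈ Finset.range (n + 1), f k p =
      ∑ K ∈ Finset.range (m + n + 1), ∑ z ∈ antidiagonal K, f z.1 z.2 := by
  rw [← Finset.sum_product', ← Finset.sum_fiberwise_of_maps_to (g := fun z => z.1 + z.2)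
    (t := Finset.range (m + n + 1)) fun z hz => by simp at hz ⊢; omega]
  refine Finset.sum_congr rfl fun K _ => Finset.sum_subset (fun z hz => by simp at hz ⊢; omega) ?_
  intro z hz hz'
  simp only [Finset.mem_filter, Finset.mem_product, Finset.mem_range,
    Finset.HasAntidiagonal.mem_antidiagonal] at hz hz'
  by_cases hk : m < z.1
  · exact hm _ _ hk
  · exact hn _ _ (by omega)

lemma fallFac_add (x : ℝ) (k p : ℕ) : fallFac x (k + p) = fallFac x k * fallFac (x - k) p := by
  simp only [fallFac, Finset.prod_range_add, Nat.cast_add, sub_sub]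

lemma inv_factorial_mul_inv_factorial (k p : ℕ) :
    ((k.factorial : ℝ))⁻¹ * ((p.factorial : ℝ))⁻¹ =
      (((k + p).factorial : ℝ))⁻¹ * (k + p).choose k := by
  have hC : ((k + p).choose p : ℝ) ≠ 0 := Nat.cast_ne_zero.mpr (Nat.choose_pos (by omega)).ne'
  rw [Nat.choose_symm_add, ← Nat.add_choose_mul_factorial_mul_factorial]
  push_cast
  field_simp

section InclusionExclusion

variable {R : Type*} [CommRing R]

lemma sum_powerset_neg_one_pow_mul_prod_ite_pow {ι : Type*} [Fintype ι] [DecidableEq ι]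
    (v : ι → R) (l : ι → ℕ) :
    ∑ T ∈ (Finset.univ : Finset ι).powerset,
        (-1) ^ (Fintype.card ι - T.card) * ∏ i, (if i ∈ T then v i else 0) ^ l i =
      if ∀ i, 0 < l i then ∏ i, v i ^ l i else 0 := by
  have hT : ∀ T : Finset ι,
      (-1 : R) ^ (Fintype.card ι - T.card) * ∏ i, (if i ∈ T then v i else 0) ^ l i =
        (∏ i ∈ T, v i ^ l i) * ∏ i ∈ Finset.univ \ T, -(0 : R) ^ l i := by
    intro T
    simp only [ite_pow, Finset.prod_neg, Finset.prod_ite, Finset.card_univ_sdiff,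
      Finset.filter_mem_eq_inter, Finset.univ_inter, Finset.filter_notMem_eq_sdiff]
    ring
  -- the sum is the expansion of `∏ i, (v i ^ l i - 0 ^ l i)`
  simp only [hT, ← Finset.prod_add, ← sub_eq_add_neg]
  split_ifs with h
  · exact Finset.prod_congr rfl fun i _ => by rw [zero_pow (h i).ne', sub_zero]
  · push Not at h
    obtain ⟨i, hi⟩ := h
    exact Finset.prod_eq_zero (Finset.mem_univ i) (by simp [Nat.le_zero.mp hi])

lemma posTuples_eq_filter (k j : ℕ) :
    posTuples k j = (Finset.piAntidiag Finset.univ j).filter fun l : Fin k → ℕ => ∀ i, 0 < l i := by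
  ext l
  simp [posTuples, Finset.mem_piAntidiag, Finset.Nat.mem_antidiagonalTuple]

lemma posTuples_eq_empty {k j : ℕ} (h : j < k) : posTuples k j = ∅ := by
  refine Finset.eq_empty_of_forall_notMem fun l hl => ?_
  rw [posTuples, Finset.mem_filter, Finset.Nat.mem_antidiagonalTuple] at hl
  have hsum : ∑ i, l i = j := hl.1
  have hle : ∑ _i : Fin k, 1 ≤ ∑ i, l i := Finset.sum_le_sum fun i _ => hl.2 i
  simp only [Finset.sum_const, Finset.card_univ, Fintype.card_fin, smul_eq_mul, mul_one] at hle
  omega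

lemma sum_add_pow_eq_sum_piAntidiag {ι : Type*} [Fintype ι] [DecidableEq ι] (T : Finset ι)
    (v : ι → R) (d : R) (m : ℕ) :
    (∑ i ∈ T, v i + d) ^ m =
      ∑ j ∈ Finset.range (m + 1), (m.choose j : R) * ∑ l ∈ Finset.piAntidiag Finset.univ j,
        (Nat.multinomial Finset.univ l : R) * (∏ i, (if i ∈ T then v i else 0) ^ l i) *
          d ^ (m - j) := by
  have hT : ∑ i ∈ T, v i = ∑ i, if i ∈ T then v i else 0 := by simp
  rw [add_pow]
  refine Finset.sum_congr rfl fun j _ => ?_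
  rw [hT, Finset.sum_pow_eq_sum_piAntidiag, Finset.sum_mul, Finset.sum_mul, Finset.mul_sum]
  exact Finset.sum_congr rfl fun l _ => by ring

lemma sum_powerset_neg_one_pow_mul_sum_add_pow {k : ℕ} (v : Fin k → R) (d : R) (m : ℕ) :
    ∑ T ∈ (Finset.univ : Finset (Fin k)).powerset, (-1) ^ (k - T.card) * (∑ i ∈ T, v i + d) ^ m =
      ∑ j ∈ Finset.Icc k m, (m.choose j : R) *
        ∑ l ∈ posTuples k j, (Nat.multinomial Finset.univ l : R) * (∏ i, v i ^ l i) *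
          d ^ (m - j) := by
  rw [Finset.sum_subset (s₁ := Finset.Icc k m) (s₂ := Finset.range (m + 1))
    (fun j hj => by simp at hj ⊢; omega) fun j hjm hj => by
      rw [posTuples_eq_empty (by simp at hj hjm; omega), Finset.sum_empty, mul_zero]]
  simp only [sum_add_pow_eq_sum_piAntidiag, Finset.mul_sum]
  rw [Finset.sum_comm]
  refine Finset.sum_congr rfl fun j _ => ?_
  rw [Finset.sum_comm, posTuples_eq_filter, Finset.sum_filter]
  refine Finset.sum_congr rfl fun l _ => ?_
  have hl := sum_powerset_neg_one_pow_mul_prod_ite_pow v l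
  rw [Fintype.card_fin] at hl
  calc _ = (m.choose j : R) * Nat.multinomial Finset.univ l * d ^ (m - j) *
        ∑ T ∈ (Finset.univ : Finset (Fin k)).powerset,
          (-1) ^ (k - T.card) * ∏ i, (if i ∈ T then v i else 0) ^ l i := by
        rw [Finset.mul_sum]
        exact Finset.sum_congr rfl fun T _ => by ring
    _ = _ := by rw [hl]; split_ifs <;> ring

end InclusionExclusion

section FiniteMoments

open scoped ENNReal

instance holderTriple_natCast_two_mul (n : ℕ) :
    ENNReal.HolderTriple (2 * n : ℕ) (2 * n : ℕ) n := by
  constructor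
  rcases n.eq_zero_or_pos with rfl | hn
  · simp
  · push_cast
    rw [ENNReal.mul_inv (by simp) (by simp), ← two_mul, ← mul_assoc,
      ENNReal.mul_inv_cancel (by simp) (by simp), one_mul]

variable {α : Type*} [MeasurableSpace α]

def finiteMoments (μ : Measure α) [IsFiniteMeasure μ] : Subalgebra ℝ (α → ℝ) where
  carrier := {f | ∀ n : ℕ, MemLp f n μ}
  mul_mem' hf hg n := (hg (2 * n)).mul (hf (2 * n))
  add_mem' hf hg n := (hf n).add (hg n)
  algebraMap_mem' c _ := memLp_const c

variable {μ : Measure α} [IsFiniteMeasure μ]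

lemma integrable_of_mem_finiteMoments {f : α → ℝ} (hf : f ∈ finiteMoments μ) : Integrable f μ :=
  memLp_one_iff_integrable.mp (by exact_mod_cast hf 1)

lemma mem_finiteMoments_of_integrable_pow {f : α → ℝ} (hf : AEStronglyMeasurable f μ)
    (h : ∀ n : ℕ, Integrable (fun x => f x ^ n) μ) : f ∈ finiteMoments μ := by
  intro n
  have h2n : MemLp f (2 * n : ℕ) μ := by
    rcases n.eq_zero_or_pos with rfl | hn
    · simpa using hf
    rw [← integrable_norm_rpow_iff hf (by simp; omega) (ENNReal.natCast_ne_top _)]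
    refine (h (2 * n)).congr (Filter.Eventually.of_forall fun x => ?_)
    simp only [ENNReal.toReal_natCast, Real.rpow_natCast, Real.norm_eq_abs, pow_mul, sq_abs]
  exact h2n.mono_exponent (by exact_mod_cast (by omega : n ≤ 2 * n))

lemma const_mem_finiteMoments (c : ℝ) : (fun _ => c) ∈ finiteMoments μ :=
  fun _ => memLp_const c

lemma add_const_pow_mem_finiteMoments {f : α → ℝ} (hf : f ∈ finiteMoments μ) (c : ℝ) (a : ℕ) :
    (fun x => (f x + c) ^ a) ∈ finiteMoments μ :=
  pow_mem (add_mem hf (const_mem_finiteMoments c)) a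

lemma fun_sum_mem_finiteMoments {ι : Type*} (s : Finset ι) {g : ι → α → ℝ}
    (hg : ∀ i ∈ s, g i ∈ finiteMoments μ) : (fun x => ∑ i ∈ s, g i x) ∈ finiteMoments μ := by
  rw [← Finset.sum_fn]
  exact sum_mem hg

lemma fun_prod_mem_finiteMoments {ι : Type*} (s : Finset ι) {g : ι → α → ℝ}
    (hg : ∀ i ∈ s, g i ∈ finiteMoments μ) : (fun x => ∏ i ∈ s, g i x) ∈ finiteMoments μ := by
  rw [← Finset.prod_fn]
  exact prod_mem hg

lemma integral_mul_sum_const_mul {ι : Type*} (s : Finset ι) (c : ι → ℝ) {f : α → ℝ}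
    {g : ι → α → ℝ} (hf : f ∈ finiteMoments μ) (hg : ∀ i ∈ s, g i ∈ finiteMoments μ) :
    ∫ x, f x * ∑ i ∈ s, c i * g i x ∂μ = ∑ i ∈ s, c i * ∫ x, f x * g i x ∂μ := by
  simp_rw [Finset.mul_sum]
  rw [integral_finsetSum]
  · refine Finset.sum_congr rfl fun i _ => ?_
    rw [← integral_const_mul]
    exact integral_congr_ae (Filter.Eventually.of_forall fun x => by ring)
  · exact fun i hi => ((integrable_of_mem_finiteMoments (mul_mem hf (hg i hi))).const_mul
      (c i)).congr (Filter.Eventually.of_forall fun x => by simp only [Pi.mul_apply]; ring)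

end FiniteMoments

section Exchangeability

variable {Ω' ι β : Type*} {mΩ : MeasurableSpace Ω'} {μ : Measure Ω'} [MeasurableSpace β]
  {Y : ι → Ω' → β} {Y₀ : Ω' → β}

lemma map_reindex_eq_pi (hIndep : iIndepFun Y μ) (hId : ∀ i, IdentDistrib (Y i) Y₀ μ μ)
    {κ : Type*} [Fintype κ] {σ : κ → ι} (hσ : σ.Injective) :
    μ.map (fun ω k => Y (σ k) ω) = Measure.pi fun _ : κ => μ.map Y₀ := by
  rw [(hIndep.precomp hσ).map_fun_eq_pi_map fun k => (hId (σ k)).aemeasurable_fst]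
  simp only [(hId _).map_eq]

lemma identDistrib_reindex (hIndep : iIndepFun Y μ) (hId : ∀ i, IdentDistrib (Y i) Y₀ μ μ)
    {κ : Type*} [Fintype κ] {σ τ : κ → ι} (hσ : σ.Injective) (hτ : τ.Injective) :
    IdentDistrib (fun ω k => Y (σ k) ω) (fun ω k => Y (τ k) ω) μ μ where
  aemeasurable_fst := aemeasurable_pi_lambda _ fun k => (hId (σ k)).aemeasurable_fst
  aemeasurable_snd := aemeasurable_pi_lambda _ fun k => (hId (τ k)).aemeasurable_fst
  map_eq := by rw [map_reindex_eq_pi hIndep hId hσ, map_reindex_eq_pi hIndep hId hτ]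

end Exchangeability

section IidSums

variable {μ : Measure Ω} {Y : ℕ → Ω → ℝ} {Y₀ : Ω → ℝ}

lemma identDistrib_sum_shift (hIndep : iIndepFun Y μ) (hId : ∀ i, IdentDistrib (Y i) Y₀ μ μ)
    (k s : ℕ) : IdentDistrib (fun ω => ∑ j ∈ Finset.range s, Y (k + j) ω) (S Y s) μ μ := by
  have h := (identDistrib_reindex hIndep hId (σ := fun j : Fin s => k + j)
    (τ := fun j : Fin s => j) (fun a b h => Fin.ext (by simpa using h)) Fin.val_injective).comp
    (u := fun v => ∑ j, v j) (by fun_prop)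
  change IdentDistrib _ (fun ω => ∑ j ∈ Finset.range s, Y j ω) _ _
  simpa only [Function.comp_def, Finset.sum_range] using h

lemma identDistrib_sum_finset (hIndep : iIndepFun Y μ) (hId : ∀ i, IdentDistrib (Y i) Y₀ μ μ)
    {N : ℕ} (T : Finset (Fin N)) :
    IdentDistrib (fun ω => (S Y N ω, ∑ i ∈ T, Y i ω)) (fun ω => (S Y N ω, S Y T.card ω)) μ μ := by
  classical
  have hT : T.card ≤ N := by simpa using T.card_le_univ
  set T₀ := (Finset.univ : Finset (Fin T.card)).map (Fin.castLEEmb hT)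
  set π : Equiv.Perm (Fin N) := (T₀.equivOfCardEq (t := T) (by simp [T₀])).extendSubtype
  have hπ : ∀ i, i ∈ T₀ ↔ π i ∈ T := fun i =>
    ⟨fun hi => Equiv.extendSubtype_mem _ i hi,
      fun hi => by_contra fun hi' => Equiv.extendSubtype_not_mem _ i hi' hi⟩
  have h := (identDistrib_reindex hIndep hId (σ := fun i => (π i : ℕ)) (τ := fun i : Fin N => i)
    (Fin.val_injective.comp π.injective) Fin.val_injective).comp
    (u := fun v => (∑ i, v i, ∑ i ∈ T₀, v i)) (by fun_prop)
  have hS : ∀ ω, ∑ i : Fin N, Y i ω = S Y N ω := fun ω => Fin.sum_univ_eq_sum_range (Y · ω) N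
  convert h using 1 <;> funext ω
  · simp only [Function.comp_apply, Prod.mk.injEq]
    exact ⟨(hS ω).symm.trans (Equiv.sum_comp π (fun i : Fin N => Y i ω)).symm,
      (Finset.sum_equiv π hπ fun i _ => rfl).symm⟩
  · simp only [Function.comp_apply, hS, T₀, Finset.sum_map, Fin.coe_castLEEmb, Fin.val_castLE]
    rw [Fin.sum_univ_eq_sum_range (Y · ω)]
    rfl

lemma indepFun_sum_shift_prefixSums (hIndep : iIndepFun Y μ)
    (hId : ∀ i, IdentDistrib (Y i) Y₀ μ μ) {k t : ℕ} (htk : t ≤ k) (s : ℕ) :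
    IndepFun (fun ω => ∑ j ∈ Finset.range s, Y (k + j) ω) (fun ω => (S Y k ω, S Y t ω)) μ := by
  classical
  have hdisj : Disjoint ((Finset.range s).map (addLeftEmbedding k)) (Finset.range k) := by
    simp [Finset.disjoint_left]
  have h := (hIndep.indepFun_finset₀ _ _ hdisj fun i => (hId i).aemeasurable_fst).comp
    (φ := fun v => ∑ i, v i)
    (ψ := fun v : Finset.range k → ℝ =>
      (∑ i, v i, ∑ i : Finset.range k, if (i : ℕ) ∈ Finset.range t then v i else 0))
    (by fun_prop) ((by fun_prop : Measurable fun v : Finset.range k → ℝ => ∑ i, v i).prodMk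
      (Finset.measurable_sum _ fun i _ => by split_ifs <;> fun_prop))
  convert h using 1 <;> funext ω
  · simp only [Function.comp_apply]
    rw [Finset.sum_coe_sort _ (fun i => Y i ω), Finset.sum_map]
    rfl
  · simp only [Function.comp_apply]
    rw [Finset.sum_coe_sort _ (fun i => Y i ω),
      Finset.sum_coe_sort _ (fun i => if i ∈ Finset.range t then Y i ω else 0), Finset.sum_ite_mem,
      Finset.inter_eq_right.mpr (Finset.range_subset_range.mpr htk)]
    rfl

lemma mem_finiteMoments_of_identDistrib [IsFiniteMeasure μ] (hId : ∀ i, IdentDistrib (Y i) Y₀ μ μ)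
    (hInt : ∀ m : ℕ, Integrable (fun ω => Y₀ ω ^ m) μ) (i : ℕ) : Y i ∈ finiteMoments μ :=
  mem_finiteMoments_of_integrable_pow (hId i).aemeasurable_fst.aestronglyMeasurable fun n =>
    ((hId i).comp (measurable_id.pow_const n)).integrable_iff.mpr (hInt n)

lemma sum_comp_mem_finiteMoments [IsFiniteMeasure μ] (hId : ∀ i, IdentDistrib (Y i) Y₀ μ μ)
    (hInt : ∀ m : ℕ, Integrable (fun ω => Y₀ ω ^ m) μ) (A : Finset ℕ) (f : ℕ → ℕ) :
    (fun ω => ∑ j ∈ A, Y (f j) ω) ∈ finiteMoments μ :=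
  fun_sum_mem_finiteMoments A fun j _ => mem_finiteMoments_of_identDistrib hId hInt (f j)

lemma integral_S_add_pow_mul_pow_eq_sum (hIndep : iIndepFun Y μ)
    (hId : ∀ i, IdentDistrib (Y i) Y₀ μ μ) (hInt : ∀ m : ℕ, Integrable (fun ω => Y₀ ω ^ m) μ)
    {k t : ℕ} (htk : t ≤ k) (s a b : ℕ) (c d : ℝ) :
    ∫ ω, (S Y (k + s) ω + c) ^ a * (S Y t ω + d) ^ b ∂μ =
      ∑ i ∈ Finset.range (a + 1), (a.choose i : ℝ) * (∫ ω, S Y s ω ^ i ∂μ) *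
        ∫ ω, (S Y k ω + c) ^ (a - i) * (S Y t ω + d) ^ b ∂μ := by
  have := hIndep.isProbabilityMeasure
  set U := fun ω => ∑ j ∈ Finset.range s, Y (k + j) ω
  have hU : U ∈ finiteMoments μ := sum_comp_mem_finiteMoments hId hInt _ _
  have hS : ∀ N, S Y N ∈ finiteMoments μ := fun N => sum_comp_mem_finiteMoments hId hInt _ id
  have hexpand : ∀ ω, (S Y (k + s) ω + c) ^ a * (S Y t ω + d) ^ b =
      ∑ i ∈ Finset.range (a + 1),
        (a.choose i : ℝ) * (U ω ^ i * ((S Y k ω + c) ^ (a - i) * (S Y t ω + d) ^ b)) := by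
    intro ω
    have hsplit : S Y (k + s) ω + c = U ω + (S Y k ω + c) := by
      simp only [S, U, Finset.sum_range_add]; ring
    rw [hsplit, add_pow, Finset.sum_mul]
    exact Finset.sum_congr rfl fun i _ => by ring
  have hindep : ∀ i, ∫ ω, U ω ^ i * ((S Y k ω + c) ^ (a - i) * (S Y t ω + d) ^ b) ∂μ =
      (∫ ω, S Y s ω ^ i ∂μ) * ∫ ω, (S Y k ω + c) ^ (a - i) * (S Y t ω + d) ^ b ∂μ := by
    intro i
    have hmeas : ∀ N, AEMeasurable (S Y N) μ := fun N => (hS N 1).aestronglyMeasurable.aemeasurable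
    rw [(indepFun_sum_shift_prefixSums hIndep hId htk s).integral_fun_comp_mul_comp
      (f := fun x => x ^ i) (g := fun p => (p.1 + c) ^ (a - i) * (p.2 + d) ^ b)
      (hU 1).aestronglyMeasurable.aemeasurable ((hmeas k).prodMk (hmeas t))
      (by fun_prop) (by fun_prop)]
    congr 1
    exact ((identDistrib_sum_shift hIndep hId k s).comp (measurable_id.pow_const i)).integral_eq
  simp_rw [hexpand]
  rw [integral_finsetSum]
  · refine Finset.sum_congr rfl fun i _ => ?_
    rw [integral_const_mul, hindep, mul_assoc]
  · exact fun i _ => (integrable_of_mem_finiteMoments (mul_mem (pow_mem hU i)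
      (mul_mem (add_const_pow_mem_finiteMoments (hS k) c _)
        (add_const_pow_mem_finiteMoments (hS t) d _)))).const_mul _

lemma integral_S_pow_mul_sum_finset_pow (hIndep : iIndepFun Y μ)
    (hId : ∀ i, IdentDistrib (Y i) Y₀ μ μ) {k N : ℕ} (hkN : k ≤ N) (T : Finset (Fin k))
    (a m : ℕ) (c d : ℝ) :
    ∫ ω, (S Y N ω + c) ^ a * (∑ i ∈ T, Y i ω + d) ^ m ∂μ =
      ∫ ω, (S Y N ω + c) ^ a * (S Y T.card ω + d) ^ m ∂μ := by
  have h := ((identDistrib_sum_finset hIndep hId (T.map (Fin.castLEEmb hkN))).comp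
    (u := fun p => (p.1 + c) ^ a * (p.2 + d) ^ m) (by fun_prop)).integral_eq
  simpa [Function.comp_def, Finset.sum_map] using h

lemma sum_posTuples_integral_eq_fwdDiff_iter (hIndep : iIndepFun Y μ)
    (hId : ∀ i, IdentDistrib (Y i) Y₀ μ μ) (hInt : ∀ m : ℕ, Integrable (fun ω => Y₀ ω ^ m) μ)
    {k N : ℕ} (hkN : k ≤ N) (a m : ℕ) (c d : ℝ) :
    ∑ j ∈ Finset.Icc k m, (m.choose j : ℝ) * ∑ l ∈ posTuples k j,
        (Nat.multinomial Finset.univ l : ℝ) *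
          (∫ ω, (S Y N ω + c) ^ a * ∏ i : Fin k, Y i ω ^ l i ∂μ) * d ^ (m - j) =
      Δ_[1] ^[k] (fun t => ∫ ω, (S Y N ω + c) ^ a * (S Y t ω + d) ^ m ∂μ) 0 := by
  have := hIndep.isProbabilityMeasure
  have hF : (fun ω => (S Y N ω + c) ^ a) ∈ finiteMoments μ :=
    add_const_pow_mem_finiteMoments (sum_comp_mem_finiteMoments hId hInt _ id) c a
  have hY := mem_finiteMoments_of_identDistrib hId hInt
  set P := (Finset.Icc k m).sigma (posTuples k)
  calc _ = ∑ z ∈ P, ((m.choose z.1 : ℝ) * Nat.multinomial Finset.univ z.2 * d ^ (m - z.1)) *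
        ∫ ω, (S Y N ω + c) ^ a * ∏ i : Fin k, Y i ω ^ z.2 i ∂μ := by
        simp only [P, Finset.sum_sigma, Finset.mul_sum]
        exact Finset.sum_congr rfl fun j _ => Finset.sum_congr rfl fun l _ => by ring
    _ = ∫ ω, (S Y N ω + c) ^ a * ∑ T ∈ (Finset.univ : Finset (Fin k)).powerset,
          (-1) ^ (k - T.card) * (∑ i ∈ T, Y i ω + d) ^ m ∂μ := by
        rw [← integral_mul_sum_const_mul P
          (fun z => (m.choose z.1 : ℝ) * Nat.multinomial Finset.univ z.2 * d ^ (m - z.1))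
          (g := fun z ω => ∏ i : Fin k, Y i ω ^ z.2 i) hF
          fun z _ => fun_prod_mem_finiteMoments _ fun i _ => pow_mem (hY i) _]
        refine integral_congr_ae (Filter.Eventually.of_forall fun ω => ?_)
        simp only [sum_powerset_neg_one_pow_mul_sum_add_pow, P, Finset.sum_sigma, Finset.mul_sum]
        exact Finset.sum_congr rfl fun j _ => Finset.sum_congr rfl fun l _ => by ring
    _ = ∑ T ∈ (Finset.univ : Finset (Fin k)).powerset,
          (-1) ^ (k - T.card) * ∫ ω, (S Y N ω + c) ^ a * (S Y T.card ω + d) ^ m ∂μ := by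
        rw [integral_mul_sum_const_mul (g := fun (T : Finset (Fin k)) ω => (∑ i ∈ T, Y i ω + d) ^ m)
          _ _ hF fun T _ => add_const_pow_mem_finiteMoments
            (fun_sum_mem_finiteMoments (g := fun i : Fin k => Y i) _ fun i _ => hY i) d m]
        simp_rw [integral_S_pow_mul_sum_finset_pow hIndep hId hkN]
    _ = _ := by
        rw [Finset.sum_powerset_apply_card
          (fun t => (-1 : ℝ) ^ (k - t) * ∫ ω, (S Y N ω + c) ^ a * (S Y t ω + d) ^ m ∂μ),
          fwdDiff_iter_eq_sum_shift]
        simp only [Finset.card_univ, Fintype.card_fin, nsmul_eq_mul, zsmul_eq_mul, zero_add,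
          smul_eq_mul, mul_one]
        push_cast
        exact Finset.sum_congr rfl fun t _ => by ring

lemma fwdDiff_iter_integral_mul_pow_eq_zero (hIndep : iIndepFun Y μ)
    (hId : ∀ i, IdentDistrib (Y i) Y₀ μ μ) (hInt : ∀ m : ℕ, Integrable (fun ω => Y₀ ω ^ m) μ)
    {k N m : ℕ} (hmk : m < k) (hkN : k ≤ N) (a : ℕ) (c d : ℝ) :
    Δ_[1] ^[k] (fun t => ∫ ω, (S Y N ω + c) ^ a * (S Y t ω + d) ^ m ∂μ) 0 = 0 := by
  rw [← sum_posTuples_integral_eq_fwdDiff_iter hIndep hId hInt hkN,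
    Finset.Icc_eq_empty (by omega), Finset.sum_empty]

end IidSums

lemma probStirling_eq_fwdDiff_iter (Y : ℕ → Ω → ℝ) (n k : ℕ) :
    probStirling Y n k = ((k.factorial : ℝ))⁻¹ * Δ_[1] ^[k] (fun i => ∫ ω, S Y i ω ^ n) 0 := by
  simp only [probStirling, fwdDiff_iter_eq_sum_shift, zero_add, smul_eq_mul, mul_one,
    zsmul_eq_mul]
  push_cast
  exact congrArg _ (Finset.sum_congr rfl fun i _ => by ring)

lemma probRStirling_eq_fwdDiff_iter (Y : ℕ → Ω → ℝ) (r n k : ℕ) :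
    probRStirling Y r n k =
      ((k.factorial : ℝ))⁻¹ * Δ_[1] ^[k] (fun j => ∫ ω, (S Y j ω + r) ^ n) 0 := by
  simp only [probRStirling, fwdDiff_iter_eq_sum_shift, zero_add, smul_eq_mul, mul_one,
    zsmul_eq_mul]
  push_cast
  exact congrArg _ (Finset.sum_congr rfl fun i _ => by ring)

def mixedDiff (Y : ℕ → Ω → ℝ) (c : ℝ) (n m k p : ℕ) : ℝ :=
  Δ_[1] ^[p] (fun s => Δ_[1] ^[k] (fun t => ∫ ω, (S Y (k + s) ω + c) ^ n * (S Y t ω + c) ^ m) 0) 0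

lemma fwdDiff_iter_integral_pow_eq_sum_mixedDiff (Y : ℕ → Ω → ℝ) (c : ℝ) (n m K : ℕ) :
    Δ_[1] ^[K] (fun q => ∫ ω, (S Y q ω + c) ^ (m + n)) 0 =
      ∑ z ∈ antidiagonal K, (K.choose z.1 : ℝ) * mixedDiff Y c n m z.1 z.2 := by
  simp_rw [pow_add, mul_comm ((S Y _ _ + c) ^ m)]
  rw [fwdDiff_iter_diag_eq_sum_antidiagonal
    (fun a t => ∫ ω, (S Y a ω + c) ^ n * (S Y t ω + c) ^ m)]
  simp [mixedDiff, nsmul_eq_mul]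

lemma phiRBiv_eq_sum_antidiagonal (Y : ℕ → Ω → ℝ) (r n m : ℕ) (x y : ℝ) :
    phiRBiv Y r (m + n) x y = ∑ K ∈ Finset.range (m + n + 1), ∑ z ∈ antidiagonal K,
      ((z.1.factorial : ℝ))⁻¹ * ((z.2.factorial : ℝ))⁻¹ * fallFac x z.1 * fallFac (x - z.1) z.2 *
        y ^ (z.1 + z.2) * mixedDiff Y r n m z.1 z.2 := by
  refine Finset.sum_congr rfl fun K _ => ?_
  rw [probRStirling_eq_fwdDiff_iter, fwdDiff_iter_integral_pow_eq_sum_mixedDiff,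
    Finset.mul_sum, Finset.sum_mul, Finset.sum_mul]
  refine Finset.sum_congr rfl fun z hz => ?_
  rw [Finset.HasAntidiagonal.mem_antidiagonal] at hz
  rw [inv_factorial_mul_inv_factorial, mul_assoc _ (fallFac x z.1), ← fallFac_add, hz]
  ring

section IidStirling

variable {Y : ℕ → Ω → ℝ} {Y₀ : Ω → ℝ}

lemma probStirling_eq_zero_of_lt (hIndep : iIndepFun Y volume)
    (hId : ∀ i, IdentDistrib (Y i) Y₀ volume volume)
    (hInt : ∀ m : ℕ, Integrable (fun ω => Y₀ ω ^ m)) {n k : ℕ} (h : n < k) :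
    probStirling Y n k = 0 := by
  have h0 := fwdDiff_iter_integral_mul_pow_eq_zero hIndep hId hInt h le_rfl 0 0 0
  simp only [add_zero, pow_zero, one_mul] at h0
  rw [probStirling_eq_fwdDiff_iter, h0, mul_zero]

lemma phiBiv_eq_sum_range (hIndep : iIndepFun Y volume)
    (hId : ∀ i, IdentDistrib (Y i) Y₀ volume volume)
    (hInt : ∀ m : ℕ, Integrable (fun ω => Y₀ ω ^ m)) {i n : ℕ} (hin : i ≤ n) (x y : ℝ) :
    phiBiv Y i x y = ∑ p ∈ Finset.range (n + 1), probStirling Y i p * fallFac x p * y ^ p := by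
  refine Finset.sum_subset (Finset.range_subset_range.mpr (by omega)) fun p _ hp => ?_
  rw [probStirling_eq_zero_of_lt hIndep hId hInt (by simpa using hp), zero_mul, zero_mul]

lemma sum_choose_mul_probStirling_mul_sum_posTuples (hIndep : iIndepFun Y volume)
    (hId : ∀ i, IdentDistrib (Y i) Y₀ volume volume)
    (hInt : ∀ m : ℕ, Integrable (fun ω => Y₀ ω ^ m)) (c : ℝ) (n m k p : ℕ) :
    ∑ i ∈ Finset.range (n + 1), (n.choose i : ℝ) * probStirling Y i p *
        ∑ j ∈ Finset.Icc k m, (m.choose j : ℝ) * ∑ l ∈ posTuples k j,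
          (Nat.multinomial Finset.univ l : ℝ) *
            (∫ ω, (S Y k ω + c) ^ (n - i) * ∏ i' : Fin k, Y i' ω ^ l i') * c ^ (m - j) =
      ((p.factorial : ℝ))⁻¹ * mixedDiff Y c n m k p := by
  have hconv : ∀ s, Δ_[1] ^[k] (fun t => ∫ ω, (S Y (k + s) ω + c) ^ n * (S Y t ω + c) ^ m) 0 =
      Δ_[1] ^[k] (fun t => ∑ i ∈ Finset.range (n + 1), (n.choose i : ℝ) * (∫ ω, S Y s ω ^ i) *
        ∫ ω, (S Y k ω + c) ^ (n - i) * (S Y t ω + c) ^ m) 0 := fun s =>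
    fwdDiff_iter_congr fun t ht => integral_S_add_pow_mul_pow_eq_sum hIndep hId hInt ht s n m c c
  have hcent := fun i =>
    sum_posTuples_integral_eq_fwdDiff_iter hIndep hId hInt (le_refl k) (n - i) m c c
  simp only [hcent]
  simp only [probStirling_eq_fwdDiff_iter, mixedDiff, hconv,
    fwdDiff_iter_fwdDiff_iter_sum_mul_mul, Finset.mul_sum]
  exact Finset.sum_congr rfl fun i _ => by ring

lemma mixedDiff_eq_zero_of_lt_left (hIndep : iIndepFun Y volume)
    (hId : ∀ i, IdentDistrib (Y i) Y₀ volume volume)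
    (hInt : ∀ m : ℕ, Integrable (fun ω => Y₀ ω ^ m)) (c : ℝ) (n : ℕ) {m k : ℕ} (hmk : m < k)
    (p : ℕ) : mixedDiff Y c n m k p = 0 := by
  simp [mixedDiff, fwdDiff_iter_eq_sum_shift,
    fwdDiff_iter_integral_mul_pow_eq_zero hIndep hId hInt hmk (Nat.le_add_right k _)]

lemma mixedDiff_eq_zero_of_lt_right (hIndep : iIndepFun Y volume)
    (hId : ∀ i, IdentDistrib (Y i) Y₀ volume volume)
    (hInt : ∀ m : ℕ, Integrable (fun ω => Y₀ ω ^ m)) (c : ℝ) {n p : ℕ} (hnp : n < p)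
    (m k : ℕ) : mixedDiff Y c n m k p = 0 := by
  have h := sum_choose_mul_probStirling_mul_sum_posTuples hIndep hId hInt c n m k p
  rw [Finset.sum_eq_zero fun i hi => by
    rw [probStirling_eq_zero_of_lt hIndep hId hInt (by simp at hi; omega), mul_zero, zero_mul]] at h
  simpa [Nat.factorial_ne_zero] using h.symm

lemma sum_sum_phiBiv_eq_sum_mixedDiff (hIndep : iIndepFun Y volume)
    (hId : ∀ i, IdentDistrib (Y i) Y₀ volume volume)
    (hInt : ∀ m : ℕ, Integrable (fun ω => Y₀ ω ^ m)) (r m n : ℕ) (x y : ℝ) :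
    ∑ i ∈ Finset.range (n + 1), ∑ k ∈ Finset.range (m + 1),
        ((k.factorial : ℝ))⁻¹ * (n.choose i : ℝ) * fallFac x k * y ^ k *
          phiBiv Y i (x - (k : ℝ)) y *
          ∑ j ∈ Finset.Icc k m, (m.choose j : ℝ) *
            ∑ l ∈ posTuples k j,
              (Nat.multinomial Finset.univ l : ℝ) *
                (∫ ω, (S Y k ω + (r : ℝ)) ^ (n - i) * ∏ i' : Fin k, (Y i' ω) ^ (l i')) *
                (r : ℝ) ^ (m - j) =
      ∑ k ∈ Finset.range (m + 1), ∑ p ∈ Finset.range (n + 1),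
        ((k.factorial : ℝ))⁻¹ * ((p.factorial : ℝ))⁻¹ * fallFac x k * fallFac (x - k) p *
          y ^ (k + p) * mixedDiff Y r n m k p := by
  rw [Finset.sum_comm]
  refine Finset.sum_congr rfl fun k _ => ?_
  have hW : ∀ p, ((k.factorial : ℝ))⁻¹ * ((p.factorial : ℝ))⁻¹ * fallFac x k * fallFac (x - k) p *
      y ^ (k + p) * mixedDiff Y r n m k p = ((k.factorial : ℝ))⁻¹ * fallFac x k *
        fallFac (x - k) p * y ^ (k + p) * (((p.factorial : ℝ))⁻¹ * mixedDiff Y r n m k p) :=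
    fun p => by ring
  simp_rw [hW, ← sum_choose_mul_probStirling_mul_sum_posTuples hIndep hId hInt,
    Finset.mul_sum (Finset.range (n + 1))]
  rw [Finset.sum_comm]
  refine Finset.sum_congr rfl fun i hi => ?_
  rw [phiBiv_eq_sum_range hIndep hId hInt (n := n) (by simpa [Nat.lt_succ_iff] using hi),
    Finset.mul_sum (Finset.range (n + 1)), Finset.sum_mul (Finset.range (n + 1))]
  exact Finset.sum_congr rfl fun p _ => by ring

end IidStirling

theorem probBivRBell_recurrence_via_Bell_general
    (Y : ℕ → Ω → ℝ) (Y₀ : Ω → ℝ)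
    (hIndep : iIndepFun Y volume)
    (hId : ∀ i, IdentDistrib (Y i) Y₀ volume volume)
    (hInt : ∀ m : ℕ, Integrable fun ω => (Y₀ ω) ^ m)
    (r : ℕ)
    (m n : ℕ) (x y : ℝ) :
    phiRBiv Y r (m + n) x y =
      ∑ i ∈ Finset.range (n + 1), ∑ k ∈ Finset.range (m + 1),
        ((k.factorial : ℝ))⁻¹ * (n.choose i : ℝ) * fallFac x k * y ^ k *
          phiBiv Y i (x - (k : ℝ)) y *
          ∑ j ∈ Finset.Icc k m, (m.choose j : ℝ) *
            ∑ l ∈ posTuples k j,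
              (Nat.multinomial Finset.univ l : ℝ) *
                (∫ ω, (S Y k ω + (r : ℝ)) ^ (n - i) * ∏ i' : Fin k, (Y i' ω) ^ (l i')) *
                (r : ℝ) ^ (m - j) := by
  rw [sum_sum_phiBiv_eq_sum_mixedDiff hIndep hId hInt, phiRBiv_eq_sum_antidiagonal,
    sum_range_sum_range_eq_sum_antidiagonal]
  · intro k p hmk
    rw [mixedDiff_eq_zero_of_lt_left hIndep hId hInt _ _ hmk, mul_zero]
  · intro k p hnp
    rw [mixedDiff_eq_zero_of_lt_right hIndep hId hInt _ hnp, mul_zero]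

theorem probBivRBell_recurrence_via_Bell
    [IsProbabilityMeasure (volume : Measure Ω)]
    (Y : ℕ → Ω → ℝ) (Y₀ : Ω → ℝ)
    (hMeas : ∀ i, Measurable (Y i))
    (hIndep : iIndepFun Y volume)
    (hId : ∀ i, IdentDistrib (Y i) Y₀ volume volume)
    (hInt : ∀ m : ℕ, Integrable fun ω => (Y₀ ω) ^ m)
    (r : ℕ) (hr : 0 < r)
    (m n : ℕ) (x y : ℝ) :
    phiRBiv Y r (m + n) x y =
      ∑ i ∈ Finset.range (n + 1), ∑ k ∈ Finset.range (m + 1),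
        ((k.factorial : ℝ))⁻¹ * (n.choose i : ℝ) * fallFac x k * y ^ k *
          phiBiv Y i (x - (k : ℝ)) y *
          ∑ j ∈ Finset.Icc k m, (m.choose j : ℝ) *
            ∑ l ∈ posTuples k j,
              (Nat.multinomial Finset.univ l : ℝ) *
                (∫ ω, (S Y k ω + (r : ℝ)) ^ (n - i) * ∏ i' : Fin k, (Y i' ω) ^ (l i')) *
                (r : ℝ) ^ (m - j) :=
  probBivRBell_recurrence_via_Bell_general Y Y₀ hIndep hId hInt r m n x y

end
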